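/- arXiv:1711.00822 — 3 statements merged into one kernel-verified Lean document; each statement's English description precedes it below -/
import Mathlib

section
/- Let f ∈ C³(ℝ) satisfy f‴(v) + f‴(−v) ≥ 0 for all v, and f‴(v) ≥ 0 for all v ≥ 0. Then for all t ≥ 0 and r > 0: (f(t+r) − f(t−r))/r − (f′(t+r) + f′(t−r)) ≤ 0. -/
noncomputable section

open Real MeasureTheory Filter Set

/-- Euclidean 3-space. -/
abbrev E3 : Type := EuclideanSpace ℝ (Fin 3)

/-- Minkowski spacetime `ℝ^{1+3}`, coordinates `(t, x)`. -/
abbrev Spt : Type := ℝ × E3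

/-- The unit sphere `S² ⊆ ℝ³`. -/
abbrev Sph : Type := Metric.sphere (0 : E3) 1

/-- The (suitably normalized) surface measure on the unit sphere. -/
instance : MeasureSpace Sph := ⟨(volume : Measure E3).toSphere⟩

/-- The japanese bracket `⟨s⟩ = (1+s²)^{1/2}`. -/
def jb (s : ℝ) : ℝ := Real.sqrt (1 + s ^ 2)

/-- Time derivative `∂_t φ`. -/
def pt (φ : Spt → ℝ) (p : Spt) : ℝ := fderiv ℝ φ p (1, 0)

/-- Spatial coordinate derivative `∂_i φ`. -/
def px (i : Fin 3) (φ : Spt → ℝ) (p : Spt) : ℝ := fderiv ℝ φ p (0, EuclideanSpace.single i 1)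

/-- Radial derivative `∂_r φ = ω·∇φ`, `ω = x/|x|`. -/
def pr (φ : Spt → ℝ) (p : Spt) : ℝ := ∑ i, (p.2 i / ‖p.2‖) * px i φ p

/-- The d'Alembertian `□φ = -∂_t²φ + Δφ`. -/
def box (φ : Spt → ℝ) (p : Spt) : ℝ := - pt (pt φ) p + ∑ i, px i (px i φ) p

/-- `|∇φ|²`. -/
def gradSq (φ : Spt → ℝ) (p : Spt) : ℝ := ∑ i, (px i φ p) ^ 2

/-- The squared angular gradient `|∇̸φ|² = |∇φ|² - (∂_rφ)²`. -/
def angSq (φ : Spt → ℝ) (p : Spt) : ℝ := gradSq φ p - (pr φ p) ^ 2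

/-- `|∂φ|² = (∂_tφ)² + |∇φ|²`. -/
def pdSq (φ : Spt → ℝ) (p : Spt) : ℝ := (pt φ p) ^ 2 + gradSq φ p

/-- `|∂̄φ|² = ((∂_t+∂_r)φ)² + |∇̸φ|²`, derivatives tangential to outgoing cones. -/
def tanSq (φ : Spt → ℝ) (p : Spt) : ℝ := (pt φ p + pr φ p) ^ 2 + angSq φ p

/-- The function `r·φ`. -/
def rmul (φ : Spt → ℝ) : Spt → ℝ := fun p => ‖p.2‖ * φ p

/-- `(∂_t + ∂_r) φ`. -/
def Lp (φ : Spt → ℝ) (p : Spt) : ℝ := pt φ p + pr φ p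

/-- `(∂_t - ∂_r) φ`. -/
def Lm (φ : Spt → ℝ) (p : Spt) : ℝ := pt φ p - pr φ p

/-- The commuting vector fields: translations `∂_t`, `∂_i`, rotations `Ω_ij = x^i∂_j - x^j∂_i`,
boosts `Ω_0i = x^i∂_t + t∂_i`, and scaling `S = t∂_t + x·∇`. -/
inductive VF : Type
  | time : VF
  | sp : Fin 3 → VF
  | rot : Fin 3 → Fin 3 → VF
  | boost : Fin 3 → VF
  | scal : VF
  deriving DecidableEq, Fintype

/-- Action of one commuting vector field on a function. -/
def VF.app : VF → (Spt → ℝ) → Spt → ℝ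
  | .time, φ => pt φ
  | .sp i, φ => px i φ
  | .rot i j, φ => fun p => p.2 i * px j φ p - p.2 j * px i φ p
  | .boost i, φ => fun p => p.2 i * pt φ p + p.1 * px i φ p
  | .scal, φ => fun p => p.1 * pt φ p + ∑ i, p.2 i * px i φ p

/-- `Z^I φ` for a multi-index `I` of length `m`. -/
def Zop {m : ℕ} (I : Fin m → VF) (φ : Spt → ℝ) : Spt → ℝ := (List.ofFn I).foldr VF.app φ

/-- `Σ_{|I| ≤ k} ‖⟨t-r⟩^{s-1} (Z^I φ)(t,·)‖_{L²(ℝ³)}`. -/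
def ZsumNorm (k : ℕ) (s t : ℝ) (φ : Spt → ℝ) : ℝ :=
  ∑ m ∈ Finset.range (k + 1), ∑ I : Fin m → VF,
    Real.sqrt (∫ x : E3, (jb (t - ‖x‖) ^ (s - 1) * Zop I φ (t, x)) ^ 2)

/-- Square integrability of all the integrands entering `ZsumNorm k s t φ`. -/
def ZsumFinite (k : ℕ) (s t : ℝ) (φ : Spt → ℝ) : Prop :=
  ∀ m : ℕ, m ≤ k → ∀ I : Fin m → VF,
    Integrable (fun x : E3 => (jb (t - ‖x‖) ^ (s - 1) * Zop I φ (t, x)) ^ 2)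

/-- `Σ_{|I| ≤ k} ‖∂ Z^I φ(t,·)‖_{L²(ℝ³)}`. -/
def ZenergyNorm (k : ℕ) (t : ℝ) (φ : Spt → ℝ) : ℝ :=
  ∑ m ∈ Finset.range (k + 1), ∑ I : Fin m → VF,
    Real.sqrt (∫ x : E3, pdSq (Zop I φ) (t, x))

/-- The backward domain of dependence `𝒟` of the ball of radius `R` at time `t₂`, above `t = t₁`. -/
def Dom (t₁ t₂ R : ℝ) : Set Spt := {p : Spt | t₁ ≤ p.1 ∧ p.1 ≤ t₂ ∧ ‖p.2‖ ≤ R + p.1 - t₂}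

/-- Flux integral `∫∫_{C_{R'}} |∂̄φ|² · wt(r - t) dS dt` over the truncated outgoing null cone
`C_{R'} = {(t,x) : max(t₁, t₂ - R') ≤ t ≤ t₂, |x| = R' + t - t₂}`. -/
def coneFlux (wt : ℝ → ℝ) (φ : Spt → ℝ) (R' t₁ t₂ : ℝ) : ℝ :=
  ∫ t in (max t₁ (t₂ - R'))..t₂, (R' + t - t₂) ^ 2 *
    ∫ ω : Sph, tanSq φ (t, (R' + t - t₂) • (ω : E3)) * wt ((R' + t - t₂) - t)

/-- The squared norm `‖φ(t,·)‖²_{1,+,s-1}`. -/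
def normPlusSq (s : ℝ) (φ : Spt → ℝ) (t : ℝ) : ℝ :=
  ∫ x : E3,
    (jb (t + ‖x‖) ^ (2 * s) * ((Lp (rmul φ) (t, x)) ^ 2 + angSq (rmul φ) (t, x))
      + jb (t - ‖x‖) ^ (2 * s) * ((Lm (rmul φ) (t, x)) ^ 2 + (φ (t, x)) ^ 2
          + (rmul φ (t, x)) ^ 2 / jb (t - ‖x‖) ^ 2)) / ‖x‖ ^ 2

/-- The norm `‖φ(t,·)‖_{1,+,s-1}`. -/
def normPlus (s : ℝ) (φ : Spt → ℝ) (t : ℝ) : ℝ := Real.sqrt (normPlusSq s φ t)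

/-- The conformal flux `F_R^s(t₁,t₂)` through the outgoing cone `{|x| = R + t - t₂}`. -/
def cFlux (s : ℝ) (φ : Spt → ℝ) (R t₁ t₂ : ℝ) : ℝ :=
  ∫ t in t₁..t₂, ∫ ω : Sph,
    (jb (t + (R + t - t₂)) ^ (2 * s) * (Lp (rmul φ) (t, (R + t - t₂) • (ω : E3))) ^ 2
      + jb (t - (R + t - t₂)) ^ (2 * s) * angSq (rmul φ) (t, (R + t - t₂) • (ω : E3)))

/-- The conformal energy `E^s_R(t)`. -/
def cE (s : ℝ) (φ : Spt → ℝ) (R t : ℝ) : ℝ :=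
  ∫ x in Metric.closedBall (0 : E3) R,
    (jb (t + ‖x‖) ^ (2 * s) * (Lp (rmul φ) (t, x)) ^ 2
      + (jb (t + ‖x‖) ^ (2 * s) + jb (t - ‖x‖) ^ (2 * s)) * angSq (rmul φ) (t, x)
      + jb (t - ‖x‖) ^ (2 * s) * (Lm (rmul φ) (t, x)) ^ 2) / ‖x‖ ^ 2

/-- `‖⟨t+r⟩^s (□φ)(t,·)‖_{L²(ℝ³)}`. -/
def boxNorm (s : ℝ) (φ : Spt → ℝ) (t : ℝ) : ℝ :=
  Real.sqrt (∫ x : E3, (jb (t + ‖x‖) ^ s * box φ (t, x)) ^ 2)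

/-! Radiation field machinery. A "smooth function on `ℝ × S²`" is modelled as a smooth
function on `ℝ × ℝ³`, only whose values on `ℝ × S²` matter (all the operators acting on it
below are tangential to `ℝ × S²`). -/

/-- `∂_q F` for `F = F(q, ω)`. -/
def dq (F : ℝ × E3 → ℝ) : ℝ × E3 → ℝ := fun p => fderiv ℝ F p (1, 0)

/-- `⟨q⟩ ∂_q F`. -/
def Dq (F : ℝ × E3 → ℝ) : ℝ × E3 → ℝ := fun p => jb p.1 * fderiv ℝ F p (1, 0)

/-- Rotation `Ω_ij` acting in the `ω` variable. -/
def RotW (i j : Fin 3) (F : ℝ × E3 → ℝ) : ℝ × E3 → ℝ := fun p =>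
  p.2 i * fderiv ℝ F p (0, EuclideanSpace.single j 1)
    - p.2 j * fderiv ℝ F p (0, EuclideanSpace.single i 1)

/-- `∂_ω^α F`, a composition of rotations in `ω`. -/
def RotPow {a : ℕ} (α : Fin a → Fin 3 × Fin 3) (F : ℝ × E3 → ℝ) : ℝ × E3 → ℝ :=
  (List.ofFn α).foldr (fun ij G => RotW ij.1 ij.2 G) F

/-- `(⟨q⟩∂_q)^k ∂_ω^α F`. -/
def DF (k : ℕ) {a : ℕ} (α : Fin a → Fin 3 × Fin 3) (F : ℝ × E3 → ℝ) : ℝ × E3 → ℝ :=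
  Dq^[k] (RotPow α F)

/-- The spherical Laplacian `Δ_ω = Σ_{i<j} Ω_ij²` acting in `ω`. -/
def sphLap (F : ℝ × E3 → ℝ) : ℝ × E3 → ℝ := fun p =>
  RotW 0 1 (RotW 0 1 F) p + RotW 0 2 (RotW 0 2 F) p + RotW 1 2 (RotW 1 2 F) p

/-- The squared norm `‖F‖²_{N,γ-1/2} = Σ_{k+|α|≤N} ∫∫ |(⟨q⟩∂_q)^k ∂_ω^α F|² ⟨q⟩^{2γ-1} dS(ω) dq`. -/
def RFnormSq (N : ℕ) (γ : ℝ) (F : ℝ × E3 → ℝ) : ℝ :=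
  ∑ k ∈ Finset.range (N + 1), ∑ a ∈ Finset.range (N + 1 - k), ∑ α : Fin a → Fin 3 × Fin 3,
    ∫ q : ℝ, ∫ ω : Sph, (DF k α F (q, (ω : E3))) ^ 2 * jb q ^ (2 * γ - 1)

/-- The norm `‖F‖_{N,γ-1/2}`. -/
def RFnorm (N : ℕ) (γ : ℝ) (F : ℝ × E3 → ℝ) : ℝ := Real.sqrt (RFnormSq N γ F)

/-- Finiteness (integrability) of all the integrals entering `‖F‖²_{N,γ-1/2}`. -/
def RFfinite (N : ℕ) (γ : ℝ) (F : ℝ × E3 → ℝ) : Prop :=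
  ∀ k a : ℕ, k + a ≤ N → ∀ α : Fin a → Fin 3 × Fin 3,
    Integrable (fun p : ℝ × Sph => (DF k α F (p.1, (p.2 : E3))) ^ 2 * jb p.1 ^ (2 * γ - 1))

/-- The range of `⟨q⟩^γ |(⟨q⟩∂_q)^k ∂_ω^α F|` on `ℝ × S²`. -/
def RFsupSet (γ : ℝ) (k : ℕ) {a : ℕ} (α : Fin a → Fin 3 × Fin 3) (F : ℝ × E3 → ℝ) : Set ℝ :=
  Set.range (fun p : ℝ × Sph => jb p.1 ^ γ * |DF k α F (p.1, (p.2 : E3))|)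

/-- The norm `‖F‖_{N,∞,γ} = Σ_{k+|α|≤N} sup_{q,ω} ⟨q⟩^γ |(⟨q⟩∂_q)^k ∂_ω^α F(q,ω)|`. -/
def RFsup (N : ℕ) (γ : ℝ) (F : ℝ × E3 → ℝ) : ℝ :=
  ∑ k ∈ Finset.range (N + 1), ∑ a ∈ Finset.range (N + 1 - k), ∑ α : Fin a → Fin 3 × Fin 3,
    sSup (RFsupSet γ k α F)

/-- Finiteness of all the suprema entering `‖F‖_{N,∞,γ}`. -/
def RFsupFinite (N : ℕ) (γ : ℝ) (F : ℝ × E3 → ℝ) : Prop :=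
  ∀ k a : ℕ, k + a ≤ N → ∀ α : Fin a → Fin 3 × Fin 3, BddAbove (RFsupSet γ k α F)

/-- The cut-off `χ`, smooth, decreasing, `= 1` on `(-∞,1/8]` and `= 0` on `[1/4,∞)`. -/
structure IsCutoff (χ : ℝ → ℝ) : Prop where
  smooth : ContDiff ℝ (⊤ : ℕ∞) χ
  anti : Antitone χ
  mem : ∀ s : ℝ, χ s ∈ Set.Icc (0 : ℝ) 1
  one : ∀ s : ℝ, s ≤ 1/8 → χ s = 1
  zero : ∀ s : ℝ, 1/4 ≤ s → χ s = 0

/-- The exterior cut-off `χ_e`, smooth, `= 0` on `(-∞,1]` and `= 1` on `[2,∞)`. -/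
structure IsMassCutoff (χe : ℝ → ℝ) : Prop where
  smooth : ContDiff ℝ (⊤ : ℕ∞) χe
  mem : ∀ s : ℝ, χe s ∈ Set.Icc (0 : ℝ) 1
  zero : ∀ s : ℝ, s ≤ 1 → χe s = 0
  one : ∀ s : ℝ, 2 ≤ s → χe s = 1

/-- `ω = x/|x|`. -/
def uSph (x : E3) : E3 := ‖x‖⁻¹ • x

/-- The first-order approximate solution `ψ₀ = r^{-1} F₀(r-t,ω) χ(⟨t-r⟩/r)`. -/
def psi0 (χ : ℝ → ℝ) (F : ℝ × E3 → ℝ) : Spt → ℝ := fun p =>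
  ‖p.2‖⁻¹ * F (‖p.2‖ - p.1, uSph p.2) * χ (jb (p.1 - ‖p.2‖) / ‖p.2‖)

/-- The second-order approximate solution
`ψ₀₁ = (r^{-1} F₀(r-t,ω) + r^{-2} F₁(r-t,ω)) χ(⟨t-r⟩/r)`. -/
def psi01 (χ : ℝ → ℝ) (F F₁ : ℝ × E3 → ℝ) : Spt → ℝ := fun p =>
  (‖p.2‖⁻¹ * F (‖p.2‖ - p.1, uSph p.2) + (‖p.2‖ ^ 2)⁻¹ * F₁ (‖p.2‖ - p.1, uSph p.2))
    * χ (jb (p.1 - ‖p.2‖) / ‖p.2‖)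

/-- `F₁` is the second radiation field determined by `F`: it is smooth,
`2 ∂_q F₁ = Δ_ω F` and `F₁(0,ω) = 0` (on the sphere). -/
structure IsF1 (F F₁ : ℝ × E3 → ℝ) : Prop where
  smooth : ContDiff ℝ (⊤ : ℕ∞) F₁
  prop : ∀ q : ℝ, ∀ ω : E3, ‖ω‖ = 1 → 2 * dq F₁ (q, ω) = sphLap F (q, ω)
  init : ∀ ω : E3, ‖ω‖ = 1 → F₁ (0, ω) = 0

/-- The explicit exterior solution `ψ_e = M χ_e(r-t)/r` carrying the mass. -/
def psiE (M : ℝ) (χe : ℝ → ℝ) : Spt → ℝ := fun p => M * χe (‖p.2‖ - p.1) / ‖p.2‖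

/-! The left-hand side is `1/r` times the error of the trapezoidal rule for
`∫_{t-r}^{t+r} f′ = f(t+r) - f(t-r)`. Its derivative in `r` is `-r (f″(t+r) - f″(t-r))`, and
the hypotheses on `f‴` say exactly that `f″` increases with `|v|` (its odd part `f″(v) - f″(-v)`
and `f″` itself are nondecreasing on `[0, ∞)`), so `f″(t-r) ≤ f″(t+r)` once `t ≥ 0`. -/

section MonotoneInAbs

variable {g : ℝ → ℝ}

theorem apply_neg_le_apply_of_deriv_add_deriv_neg_nonneg (hg : Differentiable ℝ g)
    (hsymm : ∀ v, 0 ≤ deriv g v + deriv g (-v)) {u : ℝ} (hu : 0 ≤ u) : g (-u) ≤ g u := by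
  have hodd : ∀ v, HasDerivAt (fun v => g v - g (-v)) (deriv g v + deriv g (-v)) v := fun v =>
    ((hg v).hasDerivAt.sub ((hg (-v)).hasDerivAt.comp v (hasDerivAt_neg v))).congr_deriv
      (by ring)
  have hmono : Monotone fun v => g v - g (-v) :=
    monotone_of_deriv_nonneg (fun v => (hodd v).differentiableAt)
      fun v => (hodd v).deriv ▸ hsymm v
  simpa using hmono hu

theorem apply_le_apply_of_abs_le (hg : Differentiable ℝ g)
    (hsymm : ∀ v, 0 ≤ deriv g v + deriv g (-v)) (hpos : ∀ v, 0 ≤ v → 0 ≤ deriv g v)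
    {a b : ℝ} (hab : |b| ≤ a) : g b ≤ g a := by
  have hmono : MonotoneOn g (Ici 0) :=
    monotoneOn_of_deriv_nonneg (convex_Ici 0) hg.continuous.continuousOn hg.differentiableOn
      fun v hv => hpos v (interior_subset hv)
  have habs : g b ≤ g |b| := by
    rcases le_or_gt 0 b with hb | hb
    · rw [abs_of_nonneg hb]
    · simpa [abs_of_neg hb] using
        apply_neg_le_apply_of_deriv_add_deriv_neg_nonneg hg hsymm (neg_nonneg.2 hb.le)
  exact habs.trans (hmono (abs_nonneg b) ((abs_nonneg b).trans hab) hab)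

end MonotoneInAbs

section Trapezoid

variable {f : ℝ → ℝ} (hf : Differentiable ℝ f) (hf' : Differentiable ℝ (deriv f)) (t : ℝ)
include hf hf'

theorem hasDerivAt_trapezoid_error (r : ℝ) :
    HasDerivAt (fun s => f (t + s) - f (t - s) - s * (deriv f (t + s) + deriv f (t - s)))
      (-(r * (deriv (deriv f) (t + r) - deriv (deriv f) (t - r)))) r := by
  have hp : HasDerivAt (fun s => t + s) 1 r := (hasDerivAt_id r).const_add t
  have hm : HasDerivAt (fun s => t - s) (-1) r := (hasDerivAt_id r).const_sub t
  have h0 := ((hf _).hasDerivAt.comp r hp).sub ((hf _).hasDerivAt.comp r hm)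
  have h1 := ((hf' _).hasDerivAt.comp r hp).add ((hf' _).hasDerivAt.comp r hm)
  exact (h0.sub ((hasDerivAt_id r).mul h1)).congr_deriv
    (by simp only [id, Pi.add_apply, Function.comp_apply]; ring)

theorem trapezoid_error_nonpos
    (hmono : ∀ s, 0 ≤ s → deriv (deriv f) (t - s) ≤ deriv (deriv f) (t + s)) {r : ℝ}
    (hr : 0 ≤ r) : f (t + r) - f (t - r) - r * (deriv f (t + r) + deriv f (t - r)) ≤ 0 := by
  have hE := hasDerivAt_trapezoid_error hf hf' t
  have hanti : AntitoneOn
      (fun s => f (t + s) - f (t - s) - s * (deriv f (t + s) + deriv f (t - s))) (Ici 0) := by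
    refine antitoneOn_of_deriv_nonpos (convex_Ici 0)
      (fun s _ => (hE s).continuousAt.continuousWithinAt)
      (fun s _ => (hE s).differentiableAt.differentiableWithinAt) fun s hs => ?_
    have hs : 0 ≤ s := interior_subset hs
    rw [(hE s).deriv, neg_nonpos]
    exact mul_nonneg hs (sub_nonneg.2 (hmono s hs))
  simpa using hanti self_mem_Ici hr hr

end Trapezoid

/-- if `f‴(v) + f‴(-v) ≥ 0` for all `v` and `f‴(v) ≥ 0` for `v ≥ 0`, then
`(f(t+r) - f(t-r))/r - (f′(t+r) + f′(t-r)) ≤ 0` for all `t ≥ 0`, `r > 0`. -/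
theorem weighted_deformation_sign (f : ℝ → ℝ) (hf : ContDiff ℝ 3 f)
    (h1 : ∀ v : ℝ, 0 ≤ iteratedDeriv 3 f v + iteratedDeriv 3 f (-v))
    (h2 : ∀ v : ℝ, 0 ≤ v → 0 ≤ iteratedDeriv 3 f v) :
    ∀ t : ℝ, 0 ≤ t → ∀ r : ℝ, 0 < r →
      (f (t + r) - f (t - r)) / r - (deriv f (t + r) + deriv f (t - r)) ≤ 0 := by
  intro t ht r hr
  have hdiff : ∀ n < 3, Differentiable ℝ (deriv^[n] f) := fun n hn => by
    simpa [iteratedDeriv_eq_iterate] using hf.differentiable_iteratedDeriv n (mod_cast hn)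
  have h3 : iteratedDeriv 3 f = deriv (deriv (deriv f)) := by
    simp [iteratedDeriv_eq_iterate]
  rw [h3] at h1 h2
  have hmono : ∀ s, 0 ≤ s → deriv (deriv f) (t - s) ≤ deriv (deriv f) (t + s) := fun s hs =>
    apply_le_apply_of_abs_le (hdiff 2 (by norm_num)) h1 h2 (abs_le.2 ⟨by linarith, by linarith⟩)
  have herr := trapezoid_error_nonpos (f := f) (hdiff 0 (by norm_num)) (hdiff 1 (by norm_num))
    t hmono hr.le
  rw [div_sub' hr.ne']
  exact div_nonpos_of_nonpos_of_nonneg (by linarith) hr.le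
end
end

section
/- Let s ≥ 1 and t ∈ ℝ. There is a constant C = C(s) such that for every C¹ function φ on ℝ³ (viewed at time t) with lim_{R→∞} sup_{|x|=R} ⟨t−R⟩^{2s} R φ(x)² = 0 and finite right-hand side: ∫_{ℝ³} ⟨t−r⟩^{2s} φ² dx/r² ≤ C ( ∫_{ℝ³} ⟨t−r⟩^{2s−2} φ² dx + ∫_{ℝ³} ⟨t−r⟩^{2s} (∂_r(rφ))² dx/r² ). -/
noncomputable section

open Real MeasureTheory Filter Set

/-- Spatial radial derivative `∂_r g = ω·∇g` of a function on `ℝ³`. -/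
def prS (g : E3 → ℝ) (x : E3) : ℝ := ∑ i, (x i / ‖x‖) * fderiv ℝ g x (EuclideanSpace.single i 1)

/-! Along each ray `r ↦ r • ω` put `u r = r φ(r ω)`, so `∂_r(rφ) = u'`, and write
`W = ⟨t-r⟩^{2s}`. Since `|W'| ≤ 2s ⟨t-r⟩^{2s-1}`, completing squares gives pointwise
`W u²/r² + 4 (W u²/r)' ≤ 16 s² ⟨t-r⟩^{2s-2} u² + 8 W u'²` for `r > 0`. Integrating over `[a, b]`,
the boundary term `W(b) u(b)²/b` is nonnegative, and `W(a) u(a)²/a = W(a) a φ(a ω)² → 0` as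
`a → 0`. This is the one-dimensional inequality with constant `16 s² + 8`; polar coordinates
turn it into the three-dimensional one. -/

open scoped ENNReal Topology

theorem jb_pos (q : ℝ) : 0 < jb q := Real.sqrt_pos.2 (by positivity)

theorem abs_le_jb (q : ℝ) : |q| ≤ jb q := by
  rw [← Real.sqrt_sq_eq_abs]
  exact Real.sqrt_le_sqrt (by linarith)

@[fun_prop]
theorem continuous_jb : Continuous jb := by
  unfold jb; fun_prop

theorem jb_rpow_eq_mul_sq (p q : ℝ) : jb q ^ p = jb q ^ (p - 2) * jb q ^ 2 := by
  rw [← Real.rpow_natCast, ← Real.rpow_add (jb_pos q)]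
  norm_num

theorem hasDerivAt_jb_rpow (p q : ℝ) :
    HasDerivAt (fun q => jb q ^ p) (p * q * jb q ^ (p - 2)) q := by
  have hjb : ∀ e x : ℝ, jb x ^ e = (1 + x ^ 2) ^ (e / 2) := fun e x => by
    rw [jb, Real.sqrt_eq_rpow, ← Real.rpow_mul (by positivity)]
    ring_nf
  have h := ((hasDerivAt_pow 2 q).const_add 1).rpow_const (p := p / 2)
    (Or.inl (by positivity))
  simp only [hjb]
  convert h using 1
  rw [show p / 2 - 1 = (p - 2) / 2 by ring]
  push_cast
  ring

theorem hasDerivAt_jb_sub_rpow (p t r : ℝ) :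
    HasDerivAt (fun r => jb (t - r) ^ p) (p * (r - t) * jb (t - r) ^ (p - 2)) r :=
  ((hasDerivAt_jb_rpow p (t - r)).comp r ((hasDerivAt_id r).const_sub t)).congr_deriv (by ring)

open Module Metric in
theorem lintegral_eq_lintegral_sphere_Ioi {F : Type*} [NormedAddCommGroup F] [NormedSpace ℝ F]
    [FiniteDimensional ℝ F] [Nontrivial F] [MeasurableSpace F] [BorelSpace F]
    (μ : Measure F) [μ.IsAddHaarMeasure] {f : F → ℝ≥0∞} (hf : Measurable f) :
    ∫⁻ x, f x ∂μ = ∫⁻ ω : sphere (0 : F) 1, (∫⁻ r in Ioi (0 : ℝ),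
      ENNReal.ofReal (r ^ (finrank ℝ F - 1)) * f (r • (ω : F))) ∂μ.toSphere := by
  have hfprod : Measurable fun p : sphere (0 : F) 1 × Ioi (0 : ℝ) => f (p.2.1 • (p.1 : F)) :=
    hf.comp (by fun_prop)
  calc ∫⁻ x, f x ∂μ = ∫⁻ x : ({0}ᶜ : Set F), f x ∂μ.comap (↑) := by
        rw [lintegral_subtype_comap (measurableSet_singleton 0).compl,
          restrict_compl_singleton]
    _ = ∫⁻ p, f (p.2.1 • (p.1 : F)) ∂μ.toSphere.prod (Measure.volumeIoiPow (finrank ℝ F - 1)) := by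
        rw [← (μ.measurePreserving_homeomorphUnitSphereProd).lintegral_comp_emb
          (Homeomorph.measurableEmbedding _)]
        refine lintegral_congr fun x => ?_
        simp [homeomorphUnitSphereProd, smul_smul, mul_inv_cancel₀ (norm_ne_zero_iff.2 x.2)]
    _ = _ := by
        rw [lintegral_prod _ hfprod.aemeasurable]
        refine lintegral_congr fun ω => ?_
        have hfω : Measurable fun r : Ioi (0 : ℝ) => f ((r : ℝ) • (ω : F)) :=
          hf.comp (by fun_prop)
        rw [Measure.volumeIoiPow, lintegral_withDensity_eq_lintegral_mul _ (by fun_prop) hfω,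
          ← lintegral_subtype_comap measurableSet_Ioi
            (fun r : ℝ => ENNReal.ofReal (r ^ (finrank ℝ F - 1)) * f (r • (ω : F)))]
        rfl

theorem integral_le_integral_of_lintegral_ofReal_le {α : Type*} [MeasurableSpace α]
    {μ : Measure α} {f g : α → ℝ} (hf : 0 ≤ᵐ[μ] f) (hg : Integrable g μ) (hg₀ : 0 ≤ᵐ[μ] g)
    (h : ∫⁻ x, ENNReal.ofReal (f x) ∂μ ≤ ∫⁻ x, ENNReal.ofReal (g x) ∂μ) :
    ∫ x, f x ∂μ ≤ ∫ x, g x ∂μ := by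
  by_cases hfm : AEStronglyMeasurable f μ
  · rw [integral_eq_lintegral_of_nonneg_ae hf hfm,
      integral_eq_lintegral_of_nonneg_ae hg₀ hg.aestronglyMeasurable]
    exact ENNReal.toReal_mono hg.lintegral_lt_top.ne h
  · rw [integral_non_aestronglyMeasurable hfm]
    exact integral_nonneg_of_ae hg₀

section RadialHardy

variable {s t : ℝ} {u u' : ℝ → ℝ}

/-- The bracket multiplied by `4` is the derivative of `jb (t - r) ^ (2 * s) * u r ^ 2 / r`
(`hasDerivAt_hardy_boundary`) with `x = u r`, `y = u' r`. -/
theorem weighted_hardy_pointwise (hs : 0 ≤ s) {r : ℝ} (hr : 0 < r) (x y : ℝ) :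
    jb (t - r) ^ (2 * s) * x ^ 2 / r ^ 2
        + 4 * (jb (t - r) ^ (2 * s - 2) * ((2 * s * (r - t) * x ^ 2
          + 2 * jb (t - r) ^ 2 * x * y) / r - jb (t - r) ^ 2 * x ^ 2 / r ^ 2))
      ≤ 16 * s ^ 2 * jb (t - r) ^ (2 * s - 2) * x ^ 2 + 8 * jb (t - r) ^ (2 * s) * y ^ 2 := by
  rw [jb_rpow_eq_mul_sq (2 * s)]
  set J := jb (t - r)
  set P := J ^ (2 * s - 2)
  have hP : 0 ≤ P := Real.rpow_nonneg (jb_pos _).le _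
  have hd : r - t ≤ J := (le_abs_self _).trans ((abs_sub_comm r t).trans_le (abs_le_jb _))
  have hsos : 16 * s ^ 2 * P * x ^ 2 + 8 * (P * J ^ 2) * y ^ 2
      - (P * J ^ 2 * x ^ 2 / r ^ 2 + 4 * (P * ((2 * s * (r - t) * x ^ 2 + 2 * J ^ 2 * x * y) / r
        - J ^ 2 * x ^ 2 / r ^ 2)))
      = P * (2 * J ^ 2 * (x - 2 * y * r) ^ 2 + (J - 4 * s * r) ^ 2 * x ^ 2
          + 8 * s * r * x ^ 2 * (J - (r - t))) / r ^ 2 := by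
    field_simp
    ring
  have : 0 ≤ P * (2 * J ^ 2 * (x - 2 * y * r) ^ 2 + (J - 4 * s * r) ^ 2 * x ^ 2
      + 8 * s * r * x ^ 2 * (J - (r - t))) / r ^ 2 := by
    have := sub_nonneg.2 hd
    positivity
  linarith

theorem hasDerivAt_hardy_boundary {r : ℝ} (hu : HasDerivAt u (u' r) r) (hr : r ≠ 0) :
    HasDerivAt (fun r => jb (t - r) ^ (2 * s) * u r ^ 2 / r)
      (jb (t - r) ^ (2 * s - 2) * ((2 * s * (r - t) * u r ^ 2
        + 2 * jb (t - r) ^ 2 * u r * u' r) / r - jb (t - r) ^ 2 * u r ^ 2 / r ^ 2)) r := by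
  refine (((hasDerivAt_jb_sub_rpow (2 * s) t r).mul (hu.pow 2)).div (hasDerivAt_id r) hr).congr_deriv
    ?_
  simp only [Pi.mul_apply, Pi.pow_apply, id]
  rw [jb_rpow_eq_mul_sq (2 * s)]
  field_simp
  ring

theorem lintegral_Ioc_weighted_hardy_le (hs : 0 ≤ s) (hu : ∀ r > 0, HasDerivAt u (u' r) r)
    (hu' : ContinuousOn u' (Ioi 0)) {a b : ℝ} (ha : 0 < a) (hab : a ≤ b) :
    ∫⁻ r in Ioc a b, ENNReal.ofReal (jb (t - r) ^ (2 * s) * u r ^ 2 / r ^ 2)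
      ≤ ENNReal.ofReal (4 * (jb (t - a) ^ (2 * s) * u a ^ 2 / a)) + ∫⁻ r in Ioc a b,
        ENNReal.ofReal (16 * s ^ 2 * jb (t - r) ^ (2 * s - 2) * u r ^ 2
          + 8 * jb (t - r) ^ (2 * s) * u' r ^ 2) := by
  have hpos : ∀ r ∈ Icc a b, 0 < r := fun r hr => ha.trans_le hr.1
  have hW : ∀ p r : ℝ, 0 ≤ jb (t - r) ^ p := fun p r => Real.rpow_nonneg (jb_pos _).le p
  have hcont : ∀ r ∈ Icc a b, ContinuousAt u r ∧ ContinuousAt u' r ∧ r ≠ 0 := fun r hr =>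
    ⟨(hu r (hpos r hr)).continuousAt, hu'.continuousAt (Ioi_mem_nhds (hpos r hr)),
      (hpos r hr).ne'⟩
  have hL : IntervalIntegrable (fun r => jb (t - r) ^ (2 * s) * u r ^ 2 / r ^ 2) volume a b :=
    ContinuousOn.intervalIntegrable_of_Icc hab fun r hr => by
      obtain ⟨hur, -, hr⟩ := hcont r hr
      exact (by fun_prop (disch := first | exact pow_ne_zero 2 hr | exact Or.inl (jb_pos _).ne') :
        ContinuousAt _ r).continuousWithinAt
  have hG' : IntervalIntegrable (fun r => jb (t - r) ^ (2 * s - 2) * ((2 * s * (r - t) * u r ^ 2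
        + 2 * jb (t - r) ^ 2 * u r * u' r) / r - jb (t - r) ^ 2 * u r ^ 2 / r ^ 2)) volume a b :=
    ContinuousOn.intervalIntegrable_of_Icc hab fun r hr => by
      obtain ⟨hur, hu'r, hr⟩ := hcont r hr
      exact (by fun_prop (disch := first | exact hr | exact pow_ne_zero 2 hr |
        exact Or.inl (jb_pos _).ne') : ContinuousAt _ r).continuousWithinAt
  have hH : IntervalIntegrable (fun r => 16 * s ^ 2 * jb (t - r) ^ (2 * s - 2) * u r ^ 2
      + 8 * jb (t - r) ^ (2 * s) * u' r ^ 2) volume a b :=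
    ContinuousOn.intervalIntegrable_of_Icc hab fun r hr => by
      obtain ⟨hur, hu'r, -⟩ := hcont r hr
      exact (by fun_prop (disch := exact Or.inl (jb_pos _).ne') :
        ContinuousAt _ r).continuousWithinAt
  have hftc : ∫ r in a..b, jb (t - r) ^ (2 * s - 2) * ((2 * s * (r - t) * u r ^ 2
        + 2 * jb (t - r) ^ 2 * u r * u' r) / r - jb (t - r) ^ 2 * u r ^ 2 / r ^ 2)
      = jb (t - b) ^ (2 * s) * u b ^ 2 / b - jb (t - a) ^ (2 * s) * u a ^ 2 / a := by
    refine intervalIntegral.integral_eq_sub_of_hasDerivAt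
      (f := fun r => jb (t - r) ^ (2 * s) * u r ^ 2 / r) (fun r hr => ?_) hG'
    rw [uIcc_of_le hab] at hr
    exact hasDerivAt_hardy_boundary (hu r (hpos r hr)) (hpos r hr).ne'
  have hmono := intervalIntegral.integral_mono_on hab (hL.add (hG'.const_mul 4)) hH
    fun r hr => weighted_hardy_pointwise hs (hpos r hr) (u r) (u' r)
  rw [intervalIntegral.integral_add hL (hG'.const_mul 4), intervalIntegral.integral_const_mul,
    hftc] at hmono
  have hb : 0 ≤ jb (t - b) ^ (2 * s) * u b ^ 2 / b := by
    have := hpos b ⟨hab, le_rfl⟩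
    have := hW (2 * s) b
    positivity
  rw [← ofReal_integral_eq_lintegral_ofReal hL.1 (ae_of_all _ fun r => by
      have := hW (2 * s) r; positivity),
    ← ofReal_integral_eq_lintegral_ofReal hH.1 (ae_of_all _ fun r => by
      have := hW (2 * s) r; have := hW (2 * s - 2) r; positivity),
    ← intervalIntegral.integral_of_le hab, ← intervalIntegral.integral_of_le hab]
  exact (ENNReal.ofReal_le_ofReal (by linarith)).trans ENNReal.ofReal_add_le

theorem lintegral_Ioi_weighted_hardy_le (hs : 0 ≤ s) (hu : ∀ r > 0, HasDerivAt u (u' r) r)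
    (hu' : ContinuousOn u' (Ioi 0)) (hu₀ : Tendsto (fun r => u r ^ 2 / r) (𝓝[>] 0) (𝓝 0)) :
    ∫⁻ r in Ioi 0, ENNReal.ofReal (jb (t - r) ^ (2 * s) * u r ^ 2 / r ^ 2)
      ≤ ∫⁻ r in Ioi 0, ENNReal.ofReal (16 * s ^ 2 * jb (t - r) ^ (2 * s - 2) * u r ^ 2
          + 8 * jb (t - r) ^ (2 * s) * u' r ^ 2) := by
  set a : ℕ → ℝ := fun n => 1 / (n + 1)
  set S : ℕ → Set ℝ := fun n => Ioc (a n) (n + 1)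
  have ha : ∀ n, 0 < a n := fun n => by positivity
  have hS : Monotone S := fun m n hmn =>
    Ioc_subset_Ioc (one_div_le_one_div_of_le (by positivity) (by gcongr)) (by gcongr)
  have hcover : ⋃ n, S n = Ioi 0 := by
    refine Subset.antisymm (iUnion_subset fun n r hr => (ha n).trans hr.1) fun r (hr : 0 < r) => ?_
    obtain ⟨n, hn⟩ := exists_nat_gt (max r r⁻¹)
    refine mem_iUnion.2 ⟨n, ?_, ?_⟩
    · rw [one_div_lt (by positivity) hr, one_div]
      linarith [le_max_right r r⁻¹]
    · linarith [le_max_left r r⁻¹]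
  have hboundary :
      Tendsto (fun n => ENNReal.ofReal (4 * (jb (t - a n) ^ (2 * s) * u (a n) ^ 2 / a n)))
        atTop (𝓝 0) := by
    have ha₀ : Tendsto a atTop (𝓝[>] 0) :=
      tendsto_nhdsWithin_iff.2 ⟨tendsto_one_div_add_atTop_nhds_zero_nat, Eventually.of_forall ha⟩
    have hW : Tendsto (fun r => jb (t - r) ^ (2 * s)) (𝓝[>] 0) (𝓝 (jb (t - 0) ^ (2 * s))) :=
      (by fun_prop (disch := exact Or.inl (jb_pos _).ne') :
        ContinuousAt (fun r => jb (t - r) ^ (2 * s)) 0).tendsto.mono_left nhdsWithin_le_nhds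
    simpa [mul_div_assoc] using
      (ENNReal.tendsto_ofReal (((hW.mul hu₀).const_mul 4).comp ha₀))
  conv_lhs => rw [← hcover, setLIntegral_iUnion_of_directed _ hS.directed_le]
  refine le_of_tendsto_of_tendsto' (tendsto_atTop_iSup fun m n hmn => lintegral_mono_set (hS hmn))
    (by simpa only [zero_add] using hboundary.add_const _) fun n => ?_
  refine (lintegral_Ioc_weighted_hardy_le hs hu hu' (ha n) ?_).trans
    (by gcongr; exact fun r (hr : r ∈ Ioc _ _) => (ha n).trans hr.1)
  exact (div_le_one_of_le₀ (by linarith [n.cast_nonneg (α := ℝ)]) (by positivity)).trans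
    (by linarith [n.cast_nonneg (α := ℝ)])

end RadialHardy

theorem prS_eq_fderiv (g : E3 → ℝ) (x : E3) : prS g x = fderiv ℝ g x (‖x‖⁻¹ • x) := by
  conv_rhs => rw [← (EuclideanSpace.basisFun (Fin 3) ℝ).sum_repr (‖x‖⁻¹ • x)]
  simp [prS, map_sum, div_eq_inv_mul]

theorem hasDerivAt_comp_smul_prS {g : E3 → ℝ} {ω : E3} (hω : ‖ω‖ = 1) {r : ℝ} (hr : 0 < r)
    (hg : DifferentiableAt ℝ g (r • ω)) :
    HasDerivAt (fun ρ : ℝ => g (ρ • ω)) (prS g (r • ω)) r := by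
  have hdir : ‖r • ω‖⁻¹ • r • ω = ω := by
    rw [norm_smul, hω, Real.norm_of_nonneg hr.le, mul_one, inv_smul_smul₀ hr.ne']
  rw [prS_eq_fderiv, hdir]
  exact hg.hasFDerivAt.comp_hasDerivAt r (by simpa using (hasDerivAt_id r).smul_const ω)

theorem continuousOn_prS {g : E3 → ℝ} (hg : ContDiffOn ℝ 1 g {0}ᶜ) : ContinuousOn (prS g) {0}ᶜ := by
  have := hg.continuousOn_fderiv_of_isOpen isOpen_compl_singleton le_rfl
  unfold prS
  fun_prop (disch := exact fun x hx => norm_ne_zero_iff.2 hx)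

@[fun_prop]
theorem measurable_prS (g : E3 → ℝ) : Measurable (prS g) := by
  unfold prS
  fun_prop

theorem lintegral_weighted_hardy {s : ℝ} (hs : 0 ≤ s) (t : ℝ) {φ : E3 → ℝ} (hφ : ContDiff ℝ 1 φ) :
    ∫⁻ x : E3, ENNReal.ofReal (jb (t - ‖x‖) ^ (2 * s) * φ x ^ 2 / ‖x‖ ^ 2)
      ≤ ∫⁻ x : E3, ENNReal.ofReal (16 * s ^ 2 * (jb (t - ‖x‖) ^ (2 * s - 2) * φ x ^ 2)
          + 8 * (jb (t - ‖x‖) ^ (2 * s) * prS (fun y => ‖y‖ * φ y) x ^ 2 / ‖x‖ ^ 2)) := by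
  set g : E3 → ℝ := fun y => ‖y‖ * φ y
  have hg : ContDiffOn ℝ 1 g {0}ᶜ := fun x hx =>
    ((contDiffAt_norm ℝ hx).mul hφ.contDiffAt).contDiffWithinAt
  have hφc : Continuous φ := hφ.continuous
  rw [lintegral_eq_lintegral_sphere_Ioi volume (by fun_prop),
    lintegral_eq_lintegral_sphere_Ioi volume (by fun_prop)]
  refine lintegral_mono fun ω => ?_
  have hω : ‖(ω : E3)‖ = 1 := norm_eq_of_mem_sphere ω
  have hnorm : ∀ r > 0, ‖r • (ω : E3)‖ = r := fun r hr => by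
    rw [norm_smul, hω, Real.norm_of_nonneg hr.le, mul_one]
  have hne : ∀ r : ℝ, 0 < r → r • (ω : E3) ≠ 0 := fun r hr =>
    smul_ne_zero hr.ne' (ne_zero_of_mem_unit_sphere ω)
  have hu : ∀ r > 0, HasDerivAt (fun ρ : ℝ => g (ρ • (ω : E3))) (prS g (r • (ω : E3))) r :=
    fun r hr => hasDerivAt_comp_smul_prS hω hr <| (hg.differentiableOn one_ne_zero).differentiableAt
      (isOpen_compl_singleton.mem_nhds (hne r hr))
  have hu' : ContinuousOn (fun r : ℝ => prS g (r • (ω : E3))) (Ioi 0) :=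
    (continuousOn_prS hg).comp (by fun_prop) fun r hr => hne r hr
  have hu₀ : Tendsto (fun r : ℝ => g (r • (ω : E3)) ^ 2 / r) (𝓝[>] 0) (𝓝 0) := by
    have : (fun r : ℝ => g (r • (ω : E3)) ^ 2 / r) = fun r => r * φ (r • (ω : E3)) ^ 2 := by
      funext r
      simp only [g, norm_smul, hω, mul_one, Real.norm_eq_abs, mul_pow, sq_abs]
      rcases eq_or_ne r 0 with rfl | hr
      · simp
      · field_simp
    rw [this]
    have hcont : Continuous fun r : ℝ => r * φ (r • (ω : E3)) ^ 2 := by fun_prop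
    simpa using (hcont.tendsto 0).mono_left nhdsWithin_le_nhds
  rw [show Module.finrank ℝ E3 - 1 = 2 by simp]
  calc _ = ∫⁻ r in Ioi 0, ENNReal.ofReal (jb (t - r) ^ (2 * s) * g (r • (ω : E3)) ^ 2 / r ^ 2) := by
        refine setLIntegral_congr_fun measurableSet_Ioi fun r (hr : 0 < r) => ?_
        rw [← ENNReal.ofReal_mul (by positivity)]
        simp only [g, hnorm r hr]
        congr 1
        field_simp
    _ ≤ _ := lintegral_Ioi_weighted_hardy_le hs hu hu' hu₀
    _ = _ := by
        refine setLIntegral_congr_fun measurableSet_Ioi fun r (hr : 0 < r) => ?_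
        rw [← ENNReal.ofReal_mul (by positivity)]
        simp only [g, hnorm r hr]
        congr 1
        field_simp

/-- weighted Hardy-type inequality, Lemma 2.11:
`∫ ⟨t-r⟩^{2s} φ² dx/r² ≲ ∫ ⟨t-r⟩^{2s-2} φ² dx + ∫ ⟨t-r⟩^{2s}(∂_r(rφ))² dx/r²`
provided `lim_{R→∞} sup_{|x|=R} ⟨t-R⟩^{2s} R φ(x)² = 0`. -/
theorem weighted_hardy_zeroth_order (s : ℝ) (hs : 1 ≤ s) :
    ∃ C > 0, ∀ t : ℝ, ∀ φ : E3 → ℝ, ContDiff ℝ 1 φ →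
      (∀ ε > 0, ∃ R₀ : ℝ, ∀ R : ℝ, R₀ ≤ R → ∀ x : E3, ‖x‖ = R →
        jb (t - R) ^ (2 * s) * R * (φ x) ^ 2 ≤ ε) →
      Integrable (fun x : E3 => jb (t - ‖x‖) ^ (2 * s - 2) * (φ x) ^ 2) →
      Integrable (fun x : E3 =>
        jb (t - ‖x‖) ^ (2 * s) * (prS (fun y => ‖y‖ * φ y) x) ^ 2 / ‖x‖ ^ 2) →
      (∫ x : E3, jb (t - ‖x‖) ^ (2 * s) * (φ x) ^ 2 / ‖x‖ ^ 2)
        ≤ C * ((∫ x : E3, jb (t - ‖x‖) ^ (2 * s - 2) * (φ x) ^ 2)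
            + ∫ x : E3, jb (t - ‖x‖) ^ (2 * s) * (prS (fun y => ‖y‖ * φ y) x) ^ 2 / ‖x‖ ^ 2) := by
  refine ⟨16 * s ^ 2 + 8, by positivity, fun t φ hφ _ hA hB => ?_⟩
  have hW : ∀ p : ℝ, ∀ x : E3, 0 ≤ jb (t - ‖x‖) ^ p := fun p x => Real.rpow_nonneg (jb_pos _).le p
  have hA₀ : 0 ≤ ∫ x : E3, jb (t - ‖x‖) ^ (2 * s - 2) * φ x ^ 2 :=
    integral_nonneg fun x => by have := hW (2 * s - 2) x; positivity
  have hB₀ : 0 ≤ ∫ x : E3, jb (t - ‖x‖) ^ (2 * s) * prS (fun y => ‖y‖ * φ y) x ^ 2 / ‖x‖ ^ 2 :=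
    integral_nonneg fun x => by have := hW (2 * s) x; positivity
  calc _ ≤ ∫ x : E3, (16 * s ^ 2 * (jb (t - ‖x‖) ^ (2 * s - 2) * φ x ^ 2)
          + 8 * (jb (t - ‖x‖) ^ (2 * s) * prS (fun y => ‖y‖ * φ y) x ^ 2 / ‖x‖ ^ 2)) :=
        integral_le_integral_of_lintegral_ofReal_le
          (ae_of_all _ fun x => by have := hW (2 * s) x; positivity)
          ((hA.const_mul _).add (hB.const_mul _))
          (ae_of_all _ fun x => by have := hW (2 * s) x; have := hW (2 * s - 2) x; positivity)
          (lintegral_weighted_hardy (by linarith) t hφ)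
    _ = 16 * s ^ 2 * (∫ x : E3, jb (t - ‖x‖) ^ (2 * s - 2) * φ x ^ 2)
          + 8 * ∫ x : E3, jb (t - ‖x‖) ^ (2 * s) * prS (fun y => ‖y‖ * φ y) x ^ 2 / ‖x‖ ^ 2 := by
        rw [integral_add (hA.const_mul _) (hB.const_mul _), integral_const_mul, integral_const_mul]
    _ ≤ _ := by nlinarith
end
end

section
/- (Interior decay at the origin from cone fluxes.) Let γ ≥ −1/2 and 1 ≤ t₁ < t₂, and let v be a smooth function on [t₁,t₂] × ℝ³ with v(t₂,·) = ∂_t v(t₂,·) = 0. Then t₁^{1+γ} |v(t₁,0)| ≤ C Σ_{|I|≤3} ( ∫_{t₁}^{t₂} ∫_{|x| = t − t₁} |∂̄ Z^I v|² w₋^γ dS dt )^{1/2}, where the inner integral is over the sphere of radius t − t₁ with surface measure dS, w₋^γ = (1 + (t−r)₊)^{1+2γ} (which equals (1+t₁)^{1+2γ} on this cone), and C depends only on γ. -/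
/-!
Along a generator `t ↦ (t, (t - t₁)ω)` of the light cone with vertex `(t₁, 0)` one has
`(S + ωⁱΩ₀ᵢ)v = (2t - t₁) (∂_t + ω·∇)v`, so `d/dt v(t, (t - t₁)ω) = K' · (S + ωⁱΩ₀ᵢ)v` with
`K(t) = ½ log((2t - t₁)/t₁)`. As `K(t₁) = 0`, and `(S + ωⁱΩ₀ᵢ)v` vanishes at `t = t₂` together with
`v` and `∂_t v`, an integration by parts gives `v(t₁, 0) = ∫ K · L((S + ωⁱΩ₀ᵢ)v) dt`, where
`L = ∂_t + ∂_r` is tangent to the cone. Average over `ω` and apply Cauchy–Schwarz to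
`K = (K / (t - t₁)) · (t - t₁)`: the bound `K(t) / (t - t₁) ≤ 4 t₁^{-1/4} t^{-3/4}` gives
`∫ (K / (t - t₁))² dt ≤ 32 / t₁`, and the other factor is the unweighted cone flux. The weight
on the cone is `(1 + t₁)^{1+2γ} ≥ t₁^{1+2γ}` because `γ ≥ -1/2`.
-/

noncomputable section

open Real MeasureTheory Filter Set

lemma sq_add_sum_mul_le {n : ℕ} (a : ℝ) (w b : Fin n → ℝ) (hw : ∑ i, w i ^ 2 = 1) :
    (a + ∑ i, w i * b i) ^ 2 ≤ 2 * (a ^ 2 + ∑ i, b i ^ 2) := by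
  have := Finset.sum_mul_sq_le_sq_mul_sq Finset.univ w b
  rw [hw, one_mul] at this
  nlinarith [sq_nonneg (a - ∑ i, w i * b i)]

lemma sum_sq_eq_one {w : E3} (hw : ‖w‖ = 1) : ∑ i, w i ^ 2 = 1 := by
  simpa [EuclideanSpace.norm_eq, hw] using (EuclideanSpace.norm_eq w).symm

lemma fderiv_apply_one_vec (φ : Spt → ℝ) (p : Spt) (w : E3) :
    fderiv ℝ φ p (1, w) = pt φ p + ∑ i, w i * px i φ p := by
  have hw : ((0 : ℝ), w) = ∑ i, w i • ((0 : ℝ), EuclideanSpace.single i (1 : ℝ)) := by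
    conv_lhs => rw [← (EuclideanSpace.basisFun (Fin 3) ℝ).sum_repr w]
    ext <;> simp [Prod.fst_sum, Prod.snd_sum]
  rw [show ((1 : ℝ), w) = ((1 : ℝ), (0 : E3)) + ((0 : ℝ), w) by simp, map_add, hw]
  simp only [map_sum, map_smul, smul_eq_mul, pt, px]

lemma pr_smul (φ : Spt → ℝ) (t : ℝ) {s : ℝ} (hs : 0 < s) {w : E3} (hw : ‖w‖ = 1) :
    pr φ (t, s • w) = ∑ i, w i * px i φ (t, s • w) := by
  refine Finset.sum_congr rfl fun i _ => ?_
  simp [norm_smul, hw, abs_of_pos hs, hs.ne']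

lemma angSq_nonneg (φ : Spt → ℝ) (p : Spt) : 0 ≤ angSq φ p := by
  have hcs := Finset.sum_mul_sq_le_sq_mul_sq Finset.univ (fun i => p.2 i / ‖p.2‖) (px · φ p)
  have hω : ∑ i, (p.2 i / ‖p.2‖) ^ 2 ≤ 1 := by
    rcases eq_or_ne p.2 0 with h | h
    · simp [h]
    · simp_rw [div_pow, ← Finset.sum_div]
      rw [div_le_one (by positivity)]
      simp [EuclideanSpace.norm_eq, Real.sq_sqrt (Finset.sum_nonneg fun i _ => sq_nonneg _)]
  have hg : 0 ≤ ∑ i, px i φ p ^ 2 := Finset.sum_nonneg fun i _ => sq_nonneg _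
  unfold angSq gradSq pr
  nlinarith [mul_le_mul_of_nonneg_right hω hg]

lemma tanSq_nonneg (φ : Spt → ℝ) (p : Spt) : 0 ≤ tanSq φ p :=
  add_nonneg (sq_nonneg _) (angSq_nonneg φ p)

lemma sq_Lp_le_tanSq (φ : Spt → ℝ) (p : Spt) : Lp φ p ^ 2 ≤ tanSq φ p :=
  le_add_of_nonneg_right (angSq_nonneg φ p)

lemma fderiv_apply_one_vec_eq_Lp (φ : Spt → ℝ) (t : ℝ) {s : ℝ} (hs : 0 < s) {w : E3}
    (hw : ‖w‖ = 1) : fderiv ℝ φ (t, s • w) (1, w) = Lp φ (t, s • w) := by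
  rw [fderiv_apply_one_vec, ← pr_smul φ t hs hw]; rfl

lemma scal_add_sum_boost (φ : Spt → ℝ) (t s : ℝ) {w : E3} (hw : ‖w‖ = 1) :
    VF.scal.app φ (t, s • w) + ∑ i, w i * (VF.boost i).app φ (t, s • w)
      = (t + s) * fderiv ℝ φ (t, s • w) (1, w) := by
  have h1 := sum_sq_eq_one hw
  simp only [VF.app, fderiv_apply_one_vec, PiLp.smul_apply, smul_eq_mul, Fin.sum_univ_three] at h1 ⊢
  linear_combination s * pt φ (t, s • w) * h1

lemma add_sum_boost_le_sum (f : VF → ℝ) (hf : ∀ z, 0 ≤ f z) :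
    f .scal + ∑ i, f (.boost i) ≤ ∑ z, f z := by
  let boost : Fin 3 ↪ VF := ⟨VF.boost, fun _ _ h => VF.boost.inj h⟩
  have hscal : VF.scal ∉ Finset.univ.map boost := by simp [boost]
  calc f .scal + ∑ i, f (.boost i) = ∑ z ∈ insert .scal (Finset.univ.map boost), f z := by
        rw [Finset.sum_insert hscal, Finset.sum_map]; rfl
    _ ≤ ∑ z, f z :=
        Finset.sum_le_sum_of_subset_of_nonneg (Finset.subset_univ _) fun z _ _ => hf z

lemma contDiffOn_pt {φ : Spt → ℝ} {U : Set Spt} (hU : IsOpen U)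
    (hφ : ContDiffOn ℝ (⊤ : ℕ∞) φ U) : ContDiffOn ℝ (⊤ : ℕ∞) (pt φ) U :=
  (hφ.fderiv_of_isOpen hU (by simp)).clm_apply contDiffOn_const

lemma contDiffOn_px {φ : Spt → ℝ} {U : Set Spt} (hU : IsOpen U)
    (hφ : ContDiffOn ℝ (⊤ : ℕ∞) φ U) (i : Fin 3) : ContDiffOn ℝ (⊤ : ℕ∞) (px i φ) U :=
  (hφ.fderiv_of_isOpen hU (by simp)).clm_apply contDiffOn_const

lemma contDiff_coord (i : Fin 3) : ContDiff ℝ (⊤ : ℕ∞) (fun p : Spt => p.2 i) :=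
  ((EuclideanSpace.proj (𝕜 := ℝ) i).comp (ContinuousLinearMap.snd ℝ ℝ E3)).contDiff

lemma VF.contDiffOn_app (z : VF) {φ : Spt → ℝ} {U : Set Spt} (hU : IsOpen U)
    (hφ : ContDiffOn ℝ (⊤ : ℕ∞) φ U) : ContDiffOn ℝ (⊤ : ℕ∞) (z.app φ) U := by
  have hpt := contDiffOn_pt hU hφ
  have hpx := contDiffOn_px hU hφ
  have hx := fun i => (contDiff_coord i).contDiffOn (s := U)
  have ht : ContDiffOn ℝ (⊤ : ℕ∞) (fun p : Spt => p.1) U := contDiff_fst.contDiffOn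
  cases z with
  | time => exact hpt
  | sp i => exact hpx i
  | rot i j => exact ((hx i).mul (hpx j)).sub ((hx j).mul (hpx i))
  | boost i => exact ((hx i).mul hpt).add (ht.mul (hpx i))
  | scal => exact (ht.mul hpt).add (ContDiffOn.sum fun i _ => (hx i).mul (hpx i))

lemma px_eq_zero_of_slice_eq_zero {φ : Spt → ℝ} {t : ℝ} {x : E3}
    (hd : DifferentiableAt ℝ φ (t, x)) (h0 : ∀ y, φ (t, y) = 0) (i : Fin 3) :
    px i φ (t, x) = 0 := by
  have hcomp := hd.hasFDerivAt.comp x (hasFDerivAt_prodMk_right t x)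
  have hzero : HasFDerivAt (fun y => φ (t, y)) (0 : E3 →L[ℝ] ℝ) x := by
    simpa [funext h0] using hasFDerivAt_const (0 : ℝ) x
  simpa [px] using congrArg (· (EuclideanSpace.single i 1)) (hcomp.unique hzero)

lemma VF.app_eq_zero_of_slice_eq_zero (z : VF) {φ : Spt → ℝ} {t : ℝ} {x : E3}
    (hd : DifferentiableAt ℝ φ (t, x)) (h0 : ∀ y, φ (t, y) = 0) (hpt : pt φ (t, x) = 0) :
    z.app φ (t, x) = 0 := by
  have hpx := px_eq_zero_of_slice_eq_zero hd h0
  cases z <;> simp [VF.app, hpt, hpx]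

theorem eq_integral_mul_deriv_of_hasDerivAt {u K W K' W' : ℝ → ℝ} {a b : ℝ}
    (hu : ∀ x ∈ uIcc a b, HasDerivAt u (K' x * W x) x)
    (hK : ∀ x ∈ uIcc a b, HasDerivAt K (K' x) x) (hW : ∀ x ∈ uIcc a b, HasDerivAt W (W' x) x)
    (hK' : IntervalIntegrable K' volume a b) (hW' : IntervalIntegrable W' volume a b)
    (hub : u b = 0) (hKa : K a = 0) (hWb : W b = 0) :
    u a = ∫ x in a..b, K x * W' x := by
  have hWc : ContinuousOn W (uIcc a b) := fun x hx => (hW x hx).continuousAt.continuousWithinAt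
  have hftc := intervalIntegral.integral_eq_sub_of_hasDerivAt hu (hK'.mul_continuousOn hWc)
  have hparts := intervalIntegral.integral_mul_deriv_eq_deriv_mul hK hW hK' hW'
  rw [hub, hKa, hWb] at *
  linarith

lemma Real.log_le_sub_one_mul_inv_rpow {b ε : ℝ} (hb : 1 ≤ b) (hε : 0 < ε) (hε₁ : ε ≤ 1) :
    Real.log b ≤ (b - 1) * b⁻¹ ^ (1 - ε) / ε := by
  have hb0 : 0 < b := by linarith
  have hlog : Real.log b = Real.log (b ^ ε) / ε := by
    rw [Real.log_rpow hb0]; field_simp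
  have hpow : b ^ ε - 1 ≤ (b - 1) * b⁻¹ ^ (1 - ε) := by
    have h1 : b⁻¹ ^ (1 - ε) ≤ 1 :=
      Real.rpow_le_one (by positivity) (inv_le_one_of_one_le₀ hb) (by linarith)
    have h2 : b * b⁻¹ ^ (1 - ε) = b ^ ε := by
      rw [Real.inv_rpow hb0.le, ← Real.rpow_neg hb0.le, ← Real.rpow_one_add' hb0.le (by linarith)]
      ring_nf
    nlinarith
  rw [hlog, div_le_div_iff_of_pos_right hε]
  exact (Real.log_le_sub_one_of_pos (by positivity)).trans hpow

lemma integral_rpow_neg_three_halves_le {t₁ t₂ : ℝ} (h₁ : 0 < t₁) (h₁₂ : t₁ ≤ t₂) :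
    ∫ t in t₁..t₂, t ^ (-(3 / 2) : ℝ) ≤ 2 * t₁ ^ (-(1 / 2) : ℝ) := by
  have h0 : (0 : ℝ) ∉ uIcc t₁ t₂ := by rw [uIcc_of_le h₁₂]; exact fun h => by linarith [h.1]
  rw [integral_rpow (Or.inr ⟨by norm_num, h0⟩)]
  have : 0 ≤ t₂ ^ (-(1 / 2) : ℝ) := Real.rpow_nonneg (by linarith) _
  norm_num
  linarith

def coneKernel (t₁ t : ℝ) : ℝ := Real.log ((2 * t - t₁) / t₁) / 2

lemma coneKernel_self (t₁ : ℝ) : coneKernel t₁ t₁ = 0 := by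
  rcases eq_or_ne t₁ 0 with h | h <;> simp [coneKernel, h, two_mul]

lemma hasDerivAt_coneKernel {t₁ t : ℝ} (h₁ : t₁ ≠ 0) (h : 2 * t - t₁ ≠ 0) :
    HasDerivAt (coneKernel t₁) (2 * t - t₁)⁻¹ t := by
  have hlin : HasDerivAt (fun s => (2 * s - t₁) / t₁) (2 / t₁) t := by
    simpa using (((hasDerivAt_id t).const_mul 2).sub_const t₁).div_const t₁
  exact ((hlin.log (div_ne_zero h h₁)).div_const 2).congr_deriv (by field_simp)

lemma measurable_coneKernel (t₁ : ℝ) : Measurable (coneKernel t₁) := by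
  unfold coneKernel; fun_prop

lemma coneKernel_nonneg {t₁ t : ℝ} (h₁ : 0 < t₁) (h : t₁ ≤ t) : 0 ≤ coneKernel t₁ t :=
  div_nonneg (Real.log_nonneg ((one_le_div h₁).mpr (by linarith))) zero_le_two

lemma coneKernel_le {t₁ t : ℝ} (h₁ : 0 < t₁) (h : t₁ ≤ t) : coneKernel t₁ t ≤ (t - t₁) / t₁ := by
  have := Real.log_le_sub_one_of_pos (div_pos (by linarith : 0 < 2 * t - t₁) h₁)
  have h2 : (2 * t - t₁) / t₁ - 1 = 2 * ((t - t₁) / t₁) := by rw [div_sub_one h₁.ne']; ring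
  rw [coneKernel]
  linarith

lemma coneKernel_div_le {t₁ t : ℝ} (h₁ : 0 < t₁) (h : t₁ < t) :
    coneKernel t₁ t / (t - t₁) ≤ 4 / t₁ * (t₁ / t) ^ (3 / 4 : ℝ) := by
  set b := (2 * t - t₁) / t₁
  have hb : 1 ≤ b := (one_le_div h₁).mpr (by linarith)
  have hlog := Real.log_le_sub_one_mul_inv_rpow hb (ε := 1 / 4) (by norm_num) (by norm_num)
  have hbinv : b⁻¹ ^ (1 - 1 / 4 : ℝ) ≤ (t₁ / t) ^ (3 / 4 : ℝ) := by
    norm_num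
    refine Real.rpow_le_rpow (by positivity) ?_ (by norm_num)
    rw [inv_div]
    exact div_le_div_of_nonneg_left h₁.le (by linarith) (by linarith)
  have hb1 : b - 1 = 2 * (t - t₁) / t₁ := by rw [div_sub_one h₁.ne']; ring
  rw [div_le_iff₀ (by linarith), coneKernel]
  rw [hb1] at hlog
  have : 0 ≤ 2 * (t - t₁) / t₁ := by have := sub_pos.mpr h; positivity
  calc Real.log b / 2 ≤ 2 * (t - t₁) / t₁ * b⁻¹ ^ (1 - 1 / 4 : ℝ) / (1 / 4) / 2 := by
        linarith
    _ ≤ 2 * (t - t₁) / t₁ * (t₁ / t) ^ (3 / 4 : ℝ) / (1 / 4) / 2 := by gcongr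
    _ = _ := by ring

lemma integral_sq_coneKernel_div_le {t₁ t₂ : ℝ} (h₁ : 0 < t₁) (h₁₂ : t₁ ≤ t₂) :
    ∫ t in Ioc t₁ t₂, (coneKernel t₁ t / (t - t₁)) ^ 2 ≤ 32 / t₁ := by
  set g : ℝ → ℝ := fun t => 16 / t₁ ^ 2 * t₁ ^ (3 / 2 : ℝ) * t ^ (-(3 / 2) : ℝ)
  have hbound : ∀ t ∈ Ioc t₁ t₂, (coneKernel t₁ t / (t - t₁)) ^ 2 ≤ g t := fun t ht => by
    have ht0 : 0 < t := h₁.trans ht.1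
    have hK := pow_le_pow_left₀ (div_nonneg (coneKernel_nonneg h₁ ht.1.le) (sub_pos.mpr ht.1).le)
      (coneKernel_div_le h₁ ht.1) 2
    have hpow : ((t₁ / t) ^ (3 / 4 : ℝ)) ^ 2 = t₁ ^ (3 / 2 : ℝ) * t ^ (-(3 / 2) : ℝ) := by
      rw [← Real.rpow_natCast, ← Real.rpow_mul (by positivity), Real.div_rpow h₁.le ht0.le,
        Real.rpow_neg ht0.le]
      norm_num [div_eq_mul_inv]
    refine hK.trans_eq ?_
    rw [mul_pow, hpow]
    ring
  have hg : IntegrableOn g (Ioc t₁ t₂) := by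
    refine (ContinuousOn.integrableOn_Icc ?_).mono_set Ioc_subset_Icc_self
    exact continuousOn_const.mul
      (continuousOn_id.rpow_const fun t ht => Or.inl (by linarith [ht.1] : t ≠ 0))
  have hf : IntegrableOn (fun t => (coneKernel t₁ t / (t - t₁)) ^ 2) (Ioc t₁ t₂) := by
    refine hg.mono' (((measurable_coneKernel t₁).div (measurable_id.sub_const t₁)).pow_const 2
      |>.aestronglyMeasurable) ?_
    filter_upwards [ae_restrict_mem measurableSet_Ioc] with t ht
    rw [Real.norm_eq_abs, abs_of_nonneg (sq_nonneg _)]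
    exact hbound t ht
  calc ∫ t in Ioc t₁ t₂, (coneKernel t₁ t / (t - t₁)) ^ 2
      ≤ ∫ t in Ioc t₁ t₂, g t := setIntegral_mono_on hf hg measurableSet_Ioc hbound
    _ = 16 / t₁ ^ 2 * t₁ ^ (3 / 2 : ℝ) * ∫ t in t₁..t₂, t ^ (-(3 / 2) : ℝ) := by
        rw [intervalIntegral.integral_of_le h₁₂, ← integral_const_mul]
    _ ≤ 16 / t₁ ^ 2 * t₁ ^ (3 / 2 : ℝ) * (2 * t₁ ^ (-(1 / 2) : ℝ)) := by
        gcongr; exact integral_rpow_neg_three_halves_le h₁ h₁₂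
    _ = 32 / t₁ ^ 2 * (t₁ ^ (3 / 2 : ℝ) * t₁ ^ (-(1 / 2) : ℝ)) := by ring
    _ = 32 / t₁ := by
        rw [← Real.rpow_add h₁]; norm_num; field_simp

def conePt (t₁ : ℝ) (q : Sph × ℝ) : Spt := (q.2, (q.2 - t₁) • (q.1 : E3))

/-- `d/dt [(S + ωⁱΩ₀ᵢ)φ](t, (t - t₁)ω)` at `q = (ω, t)`. -/
def coneDeriv (φ : Spt → ℝ) (t₁ : ℝ) (q : Sph × ℝ) : ℝ :=
  fderiv ℝ (VF.scal.app φ) (conePt t₁ q) (1, q.1)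
    + ∑ i, (q.1 : E3) i * fderiv ℝ ((VF.boost i).app φ) (conePt t₁ q) (1, q.1)

lemma continuous_conePt (t₁ : ℝ) : Continuous (conePt t₁) := by
  unfold conePt; fun_prop

lemma mapsTo_conePt (t₁ t₂ : ℝ) :
    MapsTo (conePt t₁) (univ ×ˢ Icc t₁ t₂) (Icc t₁ t₂ ×ˢ univ) :=
  fun _ hq => ⟨hq.2, trivial⟩

lemma hasDerivAt_comp_conePt {ψ : Spt → ℝ} {t₁ t : ℝ} (ω : Sph)
    (hψ : DifferentiableAt ℝ ψ (conePt t₁ (ω, t))) :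
    HasDerivAt (fun s => ψ (conePt t₁ (ω, s))) (fderiv ℝ ψ (conePt t₁ (ω, t)) (1, ω)) t := by
  have hc : HasDerivAt (fun s => conePt t₁ (ω, s)) ((1 : ℝ), (ω : E3)) t := by
    simpa [conePt] using
      (hasDerivAt_id t).prodMk (((hasDerivAt_id t).sub_const t₁).smul_const (ω : E3))
  exact hψ.hasFDerivAt.comp_hasDerivAt t hc

lemma sq_coneDeriv_le (φ : Spt → ℝ) {t₁ : ℝ} {q : Sph × ℝ} (hq : t₁ < q.2) :
    coneDeriv φ t₁ q ^ 2 ≤ 2 * ∑ z : VF, tanSq (z.app φ) (conePt t₁ q) := by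
  have hω : ‖(q.1 : E3)‖ = 1 := by simp
  have hL := fun ψ => fderiv_apply_one_vec_eq_Lp ψ q.2 (sub_pos.mpr hq) hω
  simp only [coneDeriv, conePt, hL]
  calc _ ≤ 2 * (Lp (VF.scal.app φ) (q.2, (q.2 - t₁) • (q.1 : E3)) ^ 2
        + ∑ i, Lp ((VF.boost i).app φ) (q.2, (q.2 - t₁) • (q.1 : E3)) ^ 2) :=
        sq_add_sum_mul_le _ _ _ (sum_sq_eq_one hω)
    _ ≤ 2 * (tanSq (VF.scal.app φ) (q.2, (q.2 - t₁) • (q.1 : E3))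
        + ∑ i, tanSq ((VF.boost i).app φ) (q.2, (q.2 - t₁) • (q.1 : E3))) := by
        gcongr <;> apply sq_Lp_le_tanSq
    _ ≤ _ := by
        gcongr
        exact add_sum_boost_le_sum (fun z => tanSq (z.app φ) _) fun z => tanSq_nonneg _ _

instance : IsFiniteMeasure (volume : Measure Sph) :=
  inferInstanceAs (IsFiniteMeasure (volume : Measure E3).toSphere)

lemma measureReal_univ_sph_pos : 0 < (volume : Measure Sph).real univ := by
  refine ENNReal.toReal_pos ?_ (measure_ne_top _ _)
  rw [show (volume : Measure Sph) = (volume : Measure E3).toSphere from rfl,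
    Measure.toSphere_apply_univ]
  exact mul_ne_zero (by simp) (Metric.measure_ball_pos volume 0 one_pos).ne'

theorem sq_integral_mul_le_integral_sq_mul_integral_sq {α : Type*} [MeasurableSpace α]
    {μ : Measure α} {f g : α → ℝ} (hf : MemLp f 2 μ) (hg : MemLp g 2 μ) :
    (∫ a, f a * g a ∂μ) ^ 2 ≤ (∫ a, f a ^ 2 ∂μ) * ∫ a, g a ^ 2 ∂μ := by
  have hpq : (2 : ℝ).HolderConjugate 2 := .two_two
  have h := integral_mul_norm_le_Lp_mul_Lq (μ := μ) hpq (by simpa using hf) (by simpa using hg)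
  simp only [Real.norm_eq_abs, ← Real.sqrt_eq_rpow, Real.rpow_two, sq_abs] at h
  have habs : |∫ a, f a * g a ∂μ| ≤ √(∫ a, f a ^ 2 ∂μ) * √(∫ a, g a ^ 2 ∂μ) :=
    abs_integral_le_integral_abs.trans (by simpa only [abs_mul] using h)
  calc (∫ a, f a * g a ∂μ) ^ 2 = |∫ a, f a * g a ∂μ| ^ 2 := (sq_abs _).symm
    _ ≤ (√(∫ a, f a ^ 2 ∂μ) * √(∫ a, g a ^ 2 ∂μ)) ^ 2 := by gcongr
    _ = _ := by
      rw [mul_pow, Real.sq_sqrt (integral_nonneg fun _ => sq_nonneg _),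
        Real.sq_sqrt (integral_nonneg fun _ => sq_nonneg _)]

def coneMeasure (t₁ t₂ : ℝ) : Measure (Sph × ℝ) :=
  (volume : Measure Sph).prod (volume.restrict (Ioc t₁ t₂))

instance (t₁ t₂ : ℝ) : IsFiniteMeasure (coneMeasure t₁ t₂) := by
  have : IsFiniteMeasure (volume.restrict (Ioc t₁ t₂)) :=
    isFiniteMeasure_restrict.mpr measure_Ioc_lt_top.ne
  unfold coneMeasure; infer_instance

lemma coneMeasure_eq_restrict (t₁ t₂ : ℝ) :
    coneMeasure t₁ t₂ = (volume : Measure (Sph × ℝ)).restrict (univ ×ˢ Ioc t₁ t₂) := by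
  rw [coneMeasure, Measure.volume_eq_prod, ← Measure.prod_restrict, Measure.restrict_univ]

lemma ae_coneMeasure (t₁ t₂ : ℝ) : ∀ᵐ q ∂coneMeasure t₁ t₂, q.2 ∈ Ioc t₁ t₂ := by
  rw [coneMeasure_eq_restrict]
  filter_upwards [ae_restrict_mem (MeasurableSet.univ.prod measurableSet_Ioc)] with q hq
  exact hq.2

lemma integrable_coneMeasure {t₁ t₂ : ℝ} {F G : Sph × ℝ → ℝ}
    (hF : ContinuousOn F (univ ×ˢ Icc t₁ t₂)) (hG : ∀ q : Sph × ℝ, q.2 ∈ Ioc t₁ t₂ → G q = F q) :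
    Integrable G (coneMeasure t₁ t₂) := by
  have hFi : Integrable F (coneMeasure t₁ t₂) := by
    rw [coneMeasure_eq_restrict]
    exact (hF.integrableOn_compact (isCompact_univ.prod isCompact_Icc)).mono_set
      (prod_mono subset_rfl Ioc_subset_Icc_self)
  exact hFi.congr (by filter_upwards [ae_coneMeasure t₁ t₂] with q hq using (hG q hq).symm)

lemma memLp_coneKernel_div {t₁ : ℝ} (h₁ : 0 < t₁) (t₂ : ℝ) :
    MemLp (fun q : Sph × ℝ => coneKernel t₁ q.2 / (q.2 - t₁)) 2 (coneMeasure t₁ t₂) := by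
  refine MemLp.of_bound (((measurable_coneKernel t₁).comp measurable_snd).div
    (measurable_snd.sub_const t₁)).aestronglyMeasurable (1 / t₁) ?_
  filter_upwards [ae_coneMeasure t₁ t₂] with q hq
  have hs : 0 < q.2 - t₁ := sub_pos.mpr hq.1
  rw [Real.norm_eq_abs, abs_of_nonneg (div_nonneg (coneKernel_nonneg h₁ hq.1.le) hs.le),
    div_le_iff₀ hs]
  calc coneKernel t₁ q.2 ≤ (q.2 - t₁) / t₁ := coneKernel_le h₁ hq.1.le
    _ = 1 / t₁ * (q.2 - t₁) := by ring

def lightConeFlux (φ : Spt → ℝ) (t₁ t₂ : ℝ) : ℝ :=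
  ∫ t in t₁..t₂, (t - t₁) ^ 2 * ∫ ω : Sph, tanSq φ (t, (t - t₁) • (ω : E3))

lemma lightConeFlux_nonneg (φ : Spt → ℝ) {t₁ t₂ : ℝ} (h₁₂ : t₁ ≤ t₂) :
    0 ≤ lightConeFlux φ t₁ t₂ :=
  intervalIntegral.integral_nonneg h₁₂ fun _ _ =>
    mul_nonneg (sq_nonneg _) (integral_nonneg fun _ => tanSq_nonneg _ _)

section Slab

variable {t₁ t₂ : ℝ} {U : Set Spt} {v : Spt → ℝ}

lemma continuousOn_fderiv_conePt_apply {ψ : Spt → ℝ} (hψ : ContinuousOn (fderiv ℝ ψ) U)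
    (hsub : Icc t₁ t₂ ×ˢ univ ⊆ U) {X : Sph × ℝ → Spt} (hX : Continuous X) :
    ContinuousOn (fun q => fderiv ℝ ψ (conePt t₁ q) (X q)) (univ ×ˢ Icc t₁ t₂) :=
  (hψ.comp (continuous_conePt t₁).continuousOn ((mapsTo_conePt t₁ t₂).mono_right hsub)).clm_apply
    hX.continuousOn

lemma continuousOn_coneDeriv {φ : Spt → ℝ} (hU : IsOpen U) (hφ : ContDiffOn ℝ (⊤ : ℕ∞) φ U)
    (hsub : Icc t₁ t₂ ×ˢ univ ⊆ U) : ContinuousOn (coneDeriv φ t₁) (univ ×ˢ Icc t₁ t₂) := by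
  have h : ∀ z : VF, ContinuousOn
      (fun q : Sph × ℝ => fderiv ℝ (z.app φ) (conePt t₁ q) (1, q.1)) (univ ×ˢ Icc t₁ t₂) :=
    fun z => continuousOn_fderiv_conePt_apply
      ((z.contDiffOn_app hU hφ).continuousOn_fderiv_of_isOpen hU (by simp)) hsub (by fun_prop)
  exact (h .scal).add (continuousOn_finsetSum _ fun i _ =>
    (Continuous.continuousOn (by fun_prop)).mul (h (.boost i)))

theorem cone_representation (h₁ : 0 < t₁) (h₁₂ : t₁ ≤ t₂) (hU : IsOpen U)
    (hsub : Icc t₁ t₂ ×ˢ univ ⊆ U) (hv : ContDiffOn ℝ (⊤ : ℕ∞) v U)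
    (hv₀ : ∀ x, v (t₂, x) = 0) (hpt₀ : ∀ x, pt v (t₂, x) = 0) (ω : Sph) :
    v (t₁, 0) = ∫ t in t₁..t₂, coneKernel t₁ t * coneDeriv v t₁ (ω, t) := by
  have hω : ‖(ω : E3)‖ = 1 := by simp
  have hmem : ∀ t ∈ uIcc t₁ t₂, conePt t₁ (ω, t) ∈ U := fun t ht =>
    hsub (mapsTo_conePt t₁ t₂ ⟨trivial, by rwa [uIcc_of_le h₁₂] at ht⟩)
  have hdiff : ∀ {ψ : Spt → ℝ}, ContDiffOn ℝ (⊤ : ℕ∞) ψ U → ∀ p ∈ U, DifferentiableAt ℝ ψ p :=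
    fun hψ p hp => (hψ.differentiableOn (by simp)).differentiableAt (hU.mem_nhds hp)
  have hpos : ∀ t ∈ uIcc t₁ t₂, 0 < 2 * t - t₁ := fun t ht => by
    rw [uIcc_of_le h₁₂] at ht; linarith [ht.1]
  set W : ℝ → ℝ := fun t => VF.scal.app v (conePt t₁ (ω, t))
    + ∑ i, (ω : E3) i * (VF.boost i).app v (conePt t₁ (ω, t))
  have hu : ∀ t ∈ uIcc t₁ t₂, HasDerivAt (fun s => v (conePt t₁ (ω, s)))
      ((2 * t - t₁)⁻¹ * W t) t := fun t ht => by
    have hW : W t = (2 * t - t₁) * fderiv ℝ v (conePt t₁ (ω, t)) (1, ω) := by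
      simp only [W, conePt, scal_add_sum_boost v t (t - t₁) hω]; ring
    rw [hW, inv_mul_cancel_left₀ (hpos t ht).ne']
    exact hasDerivAt_comp_conePt ω (hdiff hv _ (hmem t ht))
  have hK : ∀ t ∈ uIcc t₁ t₂, HasDerivAt (coneKernel t₁) (2 * t - t₁)⁻¹ t := fun t ht =>
    hasDerivAt_coneKernel h₁.ne' (hpos t ht).ne'
  have hW : ∀ t ∈ uIcc t₁ t₂, HasDerivAt W (coneDeriv v t₁ (ω, t)) t := fun t ht => by
    have hz := fun z : VF => hasDerivAt_comp_conePt ω (hdiff (z.contDiffOn_app hU hv) _ (hmem t ht))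
    exact (hz .scal).add (HasDerivAt.fun_sum fun i _ => (hz (.boost i)).const_mul _)
  have hK' : IntervalIntegrable (fun t => (2 * t - t₁)⁻¹) volume t₁ t₂ :=
    (ContinuousOn.inv₀ (by fun_prop) fun t ht => (hpos t ht).ne').intervalIntegrable
  have hW' : IntervalIntegrable (fun t => coneDeriv v t₁ (ω, t)) volume t₁ t₂ :=
    ((continuousOn_coneDeriv hU hv hsub).comp (Continuous.prodMk_right ω).continuousOn
      fun t ht => ⟨trivial, by rwa [uIcc_of_le h₁₂] at ht⟩).intervalIntegrable
  have hW₂ : W t₂ = 0 := by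
    have hd := hdiff hv _ (hmem t₂ right_mem_uIcc)
    simp only [W, conePt] at hd ⊢
    simp [VF.app_eq_zero_of_slice_eq_zero _ hd hv₀ (hpt₀ _)]
  simpa [conePt] using eq_integral_mul_deriv_of_hasDerivAt hu hK hW hK' hW' (hv₀ _)
    (coneKernel_self t₁) hW₂

lemma integrable_sq_mul_tanSq_conePt {ψ : Spt → ℝ} (hψ : ContinuousOn (fderiv ℝ ψ) U)
    (hsub : Icc t₁ t₂ ×ˢ univ ⊆ U) :
    Integrable (fun q => (q.2 - t₁) ^ 2 * tanSq ψ (conePt t₁ q)) (coneMeasure t₁ t₂) := by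
  have hd := fun {X : Sph × ℝ → Spt} (hX : Continuous X) =>
    continuousOn_fderiv_conePt_apply hψ hsub hX
  have hpx : ∀ i, ContinuousOn (fun q => px i ψ (conePt t₁ q)) (univ ×ˢ Icc t₁ t₂) :=
    fun i => hd continuous_const
  have hrad : ContinuousOn (fun q : Sph × ℝ => ∑ i, (q.1 : E3) i * px i ψ (conePt t₁ q))
      (univ ×ˢ Icc t₁ t₂) :=
    continuousOn_finsetSum _ fun i _ => (Continuous.continuousOn (by fun_prop)).mul (hpx i)
  -- On the cone `pr ψ` is `ω·∇ψ`, which, unlike `(x/|x|)·∇ψ`, stays continuous at the vertex.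
  refine integrable_coneMeasure (F := fun q => (q.2 - t₁) ^ 2 *
      ((pt ψ (conePt t₁ q) + ∑ i, (q.1 : E3) i * px i ψ (conePt t₁ q)) ^ 2
        + (∑ i, px i ψ (conePt t₁ q) ^ 2 - (∑ i, (q.1 : E3) i * px i ψ (conePt t₁ q)) ^ 2)))
    ?_ fun q hq => ?_
  · exact (Continuous.continuousOn (by fun_prop)).mul
      (((hd continuous_const).add hrad).pow 2 |>.add
        ((continuousOn_finsetSum _ fun i _ => (hpx i).pow 2).sub (hrad.pow 2)))
  · have hs : 0 < q.2 - t₁ := sub_pos.mpr hq.1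
    simp only [tanSq, angSq, gradSq, conePt, pr_smul ψ q.2 hs (by simp : ‖(q.1 : E3)‖ = 1)]

lemma integral_sq_mul_tanSq_conePt {ψ : Spt → ℝ} (h₁₂ : t₁ ≤ t₂)
    (hint : Integrable (fun q => (q.2 - t₁) ^ 2 * tanSq ψ (conePt t₁ q)) (coneMeasure t₁ t₂)) :
    ∫ q, (q.2 - t₁) ^ 2 * tanSq ψ (conePt t₁ q) ∂coneMeasure t₁ t₂ = lightConeFlux ψ t₁ t₂ := by
  rw [coneMeasure, integral_prod_symm _ hint, lightConeFlux, intervalIntegral.integral_of_le h₁₂]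
  simp only [integral_const_mul, conePt]

lemma integral_coneKernel_mul_coneDeriv (h₁ : 0 < t₁) (h₁₂ : t₁ ≤ t₂) (hU : IsOpen U)
    (hsub : Icc t₁ t₂ ×ˢ univ ⊆ U) (hv : ContDiffOn ℝ (⊤ : ℕ∞) v U)
    (hv₀ : ∀ x, v (t₂, x) = 0) (hpt₀ : ∀ x, pt v (t₂, x) = 0) :
    ∫ q, coneKernel t₁ q.2 * coneDeriv v t₁ q ∂coneMeasure t₁ t₂
      = (volume : Measure Sph).real univ * v (t₁, 0) := by
  have hK : ContinuousOn (fun q : Sph × ℝ => coneKernel t₁ q.2) (univ ×ˢ Icc t₁ t₂) :=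
    fun q hq => (hasDerivAt_coneKernel h₁.ne' (by linarith [hq.2.1])).continuousAt.comp
      continuous_snd.continuousAt |>.continuousWithinAt
  have hint : Integrable (fun q => coneKernel t₁ q.2 * coneDeriv v t₁ q) (coneMeasure t₁ t₂) :=
    integrable_coneMeasure (hK.mul (continuousOn_coneDeriv hU hv hsub)) fun _ _ => rfl
  rw [coneMeasure, integral_prod _ hint]
  simp_rw [← intervalIntegral.integral_of_le h₁₂,
    ← cone_representation h₁ h₁₂ hU hsub hv hv₀ hpt₀, integral_const, smul_eq_mul]

lemma integral_sq_mul_coneDeriv_le (h₁₂ : t₁ ≤ t₂) (hU : IsOpen U)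
    (hsub : Icc t₁ t₂ ×ˢ univ ⊆ U) (hv : ContDiffOn ℝ (⊤ : ℕ∞) v U) :
    ∫ q, ((q.2 - t₁) * coneDeriv v t₁ q) ^ 2 ∂coneMeasure t₁ t₂
      ≤ 2 * ∑ z : VF, lightConeFlux (z.app v) t₁ t₂ := by
  have hint : ∀ z : VF, Integrable (fun q => (q.2 - t₁) ^ 2 * tanSq (z.app v) (conePt t₁ q))
      (coneMeasure t₁ t₂) := fun z => integrable_sq_mul_tanSq_conePt
    ((z.contDiffOn_app hU hv).continuousOn_fderiv_of_isOpen hU (by simp)) hsub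
  calc ∫ q, ((q.2 - t₁) * coneDeriv v t₁ q) ^ 2 ∂coneMeasure t₁ t₂
      ≤ ∫ q, 2 * ∑ z : VF, (q.2 - t₁) ^ 2 * tanSq (z.app v) (conePt t₁ q) ∂coneMeasure t₁ t₂ := by
        refine integral_mono_of_nonneg (.of_forall fun _ => sq_nonneg _)
          ((integrable_finsetSum _ fun z _ => hint z).const_mul 2) ?_
        filter_upwards [ae_coneMeasure t₁ t₂] with q hq
        rw [mul_pow, ← Finset.mul_sum, mul_left_comm]
        exact mul_le_mul_of_nonneg_left (sq_coneDeriv_le v hq.1) (sq_nonneg _)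
    _ = 2 * ∑ z : VF, lightConeFlux (z.app v) t₁ t₂ := by
        rw [integral_const_mul, integral_finsetSum _ fun z _ => hint z]
        simp_rw [integral_sq_mul_tanSq_conePt h₁₂ (hint _)]

theorem sqrt_mul_abs_le_sum_sqrt_lightConeFlux (h₁ : 0 < t₁) (h₁₂ : t₁ ≤ t₂) (hU : IsOpen U)
    (hsub : Icc t₁ t₂ ×ˢ univ ⊆ U) (hv : ContDiffOn ℝ (⊤ : ℕ∞) v U)
    (hv₀ : ∀ x, v (t₂, x) = 0) (hpt₀ : ∀ x, pt v (t₂, x) = 0) :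
    √((volume : Measure Sph).real univ * t₁) * |v (t₁, 0)|
      ≤ 8 * ∑ z : VF, √(lightConeFlux (z.app v) t₁ t₂) := by
  set σ := (volume : Measure Sph).real univ
  have hσ : 0 < σ := measureReal_univ_sph_pos
  set S := ∑ z : VF, √(lightConeFlux (z.app v) t₁ t₂)
  set f : Sph × ℝ → ℝ := fun q => coneKernel t₁ q.2 / (q.2 - t₁)
  set g : Sph × ℝ → ℝ := fun q => (q.2 - t₁) * coneDeriv v t₁ q
  have hfg : ∫ q, f q * g q ∂coneMeasure t₁ t₂ = σ * v (t₁, 0) := by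
    rw [← integral_coneKernel_mul_coneDeriv h₁ h₁₂ hU hsub hv hv₀ hpt₀]
    refine integral_congr_ae ?_
    filter_upwards [ae_coneMeasure t₁ t₂] with q hq
    simp only [f, g]
    field_simp [(sub_pos.mpr hq.1).ne']
  have hf2 : ∫ q, f q ^ 2 ∂coneMeasure t₁ t₂ ≤ σ * (32 / t₁) := by
    simp only [f, coneMeasure, integral_fun_snd (fun t => (coneKernel t₁ t / (t - t₁)) ^ 2)]
    exact mul_le_mul_of_nonneg_left (integral_sq_coneKernel_div_le h₁ h₁₂) hσ.le
  have hg : MemLp g 2 (coneMeasure t₁ t₂) := by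
    have hc : ContinuousOn g (univ ×ˢ Icc t₁ t₂) :=
      (Continuous.continuousOn (by fun_prop)).mul (continuousOn_coneDeriv hU hv hsub)
    exact (memLp_two_iff_integrable_sq (integrable_coneMeasure hc fun _ _ => rfl).1).2
      (integrable_coneMeasure (hc.pow 2) fun _ _ => rfl)
  have hg2 : ∫ q, g q ^ 2 ∂coneMeasure t₁ t₂ ≤ 2 * S ^ 2 := by
    refine (integral_sq_mul_coneDeriv_le h₁₂ hU hsub hv).trans ?_
    gcongr
    calc ∑ z : VF, lightConeFlux (z.app v) t₁ t₂ = ∑ z : VF, √(lightConeFlux (z.app v) t₁ t₂) ^ 2 :=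
          Finset.sum_congr rfl fun z _ => (Real.sq_sqrt (lightConeFlux_nonneg _ h₁₂)).symm
      _ ≤ S ^ 2 := Finset.sum_sq_le_sq_sum_of_nonneg fun z _ => Real.sqrt_nonneg _
  have hCS := sq_integral_mul_le_integral_sq_mul_integral_sq (memLp_coneKernel_div h₁ t₂) hg
  rw [hfg] at hCS
  have hsq : σ * t₁ * v (t₁, 0) ^ 2 ≤ 64 * S ^ 2 :=
    calc σ * t₁ * v (t₁, 0) ^ 2 = t₁ / σ * (σ * v (t₁, 0)) ^ 2 := by field_simp
      _ ≤ t₁ / σ * (σ * (32 / t₁) * (2 * S ^ 2)) := by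
        gcongr
        exact hCS.trans (mul_le_mul hf2 hg2 (integral_nonneg fun _ => sq_nonneg _) (by positivity))
      _ = 64 * S ^ 2 := by field_simp; ring
  have hS : 0 ≤ S := Finset.sum_nonneg fun z _ => Real.sqrt_nonneg _
  refine (pow_le_pow_iff_left₀ (by positivity) (by positivity) two_ne_zero).mp ?_
  rw [mul_pow, mul_pow, Real.sq_sqrt (by positivity), sq_abs]
  linarith

end Slab

lemma Zop_fin_one (I : Fin 1 → VF) (φ : Spt → ℝ) : Zop I φ = (I 0).app φ := by
  simp [Zop, List.ofFn_succ]

lemma sum_app_le_sum_Zop (Φ : (Spt → ℝ) → ℝ) (hΦ : ∀ φ, 0 ≤ Φ φ) (v : Spt → ℝ) :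
    ∑ z : VF, Φ (z.app v) ≤ ∑ m ∈ Finset.range 4, ∑ I : Fin m → VF, Φ (Zop I v) := by
  have h1 : ∑ I : Fin 1 → VF, Φ (Zop I v) = ∑ z : VF, Φ (z.app v) :=
    Fintype.sum_equiv (Equiv.funUnique (Fin 1) VF) _ _ fun I => by simp [Zop_fin_one]
  rw [← h1]
  exact Finset.single_le_sum (f := fun m => ∑ I : Fin m → VF, Φ (Zop I v))
    (fun m _ => Finset.sum_nonneg fun I _ => hΦ _) (by simp)

def weightedConeFlux (γ : ℝ) (φ : Spt → ℝ) (t₁ t₂ : ℝ) : ℝ :=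
  ∫ t in t₁..t₂, (t - t₁) ^ 2 * ∫ ω : Sph, tanSq φ (t, (t - t₁) • (ω : E3))
    * (1 + max (t - (t - t₁)) 0) ^ (1 + 2 * γ)

lemma weightedConeFlux_eq (γ : ℝ) (φ : Spt → ℝ) {t₁ : ℝ} (h₁ : 0 ≤ t₁) (t₂ : ℝ) :
    weightedConeFlux γ φ t₁ t₂ = (1 + t₁) ^ (1 + 2 * γ) * lightConeFlux φ t₁ t₂ := by
  simp only [weightedConeFlux, sub_sub_cancel, max_eq_left h₁, integral_mul_const, lightConeFlux,
    ← intervalIntegral.integral_const_mul]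
  congr 1 with t
  ring

lemma rpow_le_sqrt_mul_sqrt {t γ : ℝ} (ht : 0 < t) (hγ : -(1 / 2 : ℝ) ≤ γ) :
    t ^ (1 + γ) ≤ √t * √((1 + t) ^ (1 + 2 * γ)) := by
  rw [← Real.sqrt_mul ht.le]
  refine Real.le_sqrt_of_sq_le ?_
  rw [← Real.rpow_natCast, ← Real.rpow_mul ht.le,
    show (1 + γ) * ((2 : ℕ) : ℝ) = 1 + (1 + 2 * γ) by push_cast; ring, Real.rpow_add ht,
    Real.rpow_one]
  gcongr
  · linarith
  · linarith

/-- Interior decay at the origin from cone fluxes, Lemma 3.4: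
`t₁^{1+γ} |v(t₁,0)| ≤ C Σ_{|I|≤3} (∫_{t₁}^{t₂} ∫_{|x|=t-t₁} |∂̄Z^I v|² w₋^γ dS dt)^{1/2}`
for `v` vanishing to first order at `t = t₂`. -/
theorem interior_decay_at_origin (γ : ℝ) (hγ : -(1/2 : ℝ) ≤ γ) :
    ∃ C > 0, ∀ t₁ t₂ : ℝ, 1 ≤ t₁ → t₁ < t₂ →
      ∀ v : Spt → ℝ, ∀ U : Set Spt, IsOpen U →
        Set.Icc t₁ t₂ ×ˢ (Set.univ : Set E3) ⊆ U → ContDiffOn ℝ (⊤ : ℕ∞) v U →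
        (∀ x : E3, v (t₂, x) = 0 ∧ pt v (t₂, x) = 0) →
        t₁ ^ (1 + γ) * |v (t₁, (0 : E3))|
          ≤ C * ∑ m ∈ Finset.range 4, ∑ I : Fin m → VF,
              Real.sqrt (∫ t in t₁..t₂, (t - t₁) ^ 2 *
                ∫ ω : Sph, tanSq (Zop I v) (t, (t - t₁) • (ω : E3))
                  * (1 + max (t - (t - t₁)) 0) ^ (1 + 2 * γ)) := by
  set σ := (volume : Measure Sph).real univ
  have hσ : 0 < σ := measureReal_univ_sph_pos
  refine ⟨8 / √σ, by positivity, fun t₁ t₂ h₁ h₁₂ v U hU hsub hv hbc => ?_⟩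
  have ht₁ : 0 < t₁ := by linarith
  have hcore := sqrt_mul_abs_le_sum_sqrt_lightConeFlux ht₁ h₁₂.le hU hsub hv
    (fun x => (hbc x).1) (fun x => (hbc x).2)
  show _ ≤ _ * ∑ m ∈ Finset.range 4, ∑ I : Fin m → VF, √(weightedConeFlux γ (Zop I v) t₁ t₂)
  calc t₁ ^ (1 + γ) * |v (t₁, 0)| ≤ √t₁ * √((1 + t₁) ^ (1 + 2 * γ)) * |v (t₁, 0)| := by
        gcongr; exact rpow_le_sqrt_mul_sqrt ht₁ hγ
    _ = √((1 + t₁) ^ (1 + 2 * γ)) / √σ * (√(σ * t₁) * |v (t₁, 0)|) := by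
        rw [Real.sqrt_mul hσ.le]; field_simp
    _ ≤ √((1 + t₁) ^ (1 + 2 * γ)) / √σ * (8 * ∑ z : VF, √(lightConeFlux (z.app v) t₁ t₂)) := by
        gcongr
    _ = 8 / √σ * ∑ z : VF, √(weightedConeFlux γ (z.app v) t₁ t₂) := by
        have hW : 0 ≤ (1 + t₁) ^ (1 + 2 * γ) := Real.rpow_nonneg (by linarith) _
        simp only [weightedConeFlux_eq γ _ ht₁.le, Real.sqrt_mul hW, ← Finset.mul_sum]
        ring
    _ ≤ _ := by
        gcongr
        exact sum_app_le_sum_Zop (fun φ => √(weightedConeFlux γ φ t₁ t₂))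
          (fun _ => Real.sqrt_nonneg _) v

end
end
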